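/- Let (G,Γ₁,Γ₂) be a boundary triple for S. For a self-adjoint linear relation Λ on G, let H^Λ denote the restriction of S* to {φ ∈ dom S* : (Γ₁φ, Γ₂φ) ∈ Λ}. Then the map Λ ↦ H^Λ is a bijection between the self-adjoint linear relations on G and the self-adjoint extensions of S: for every self-adjoint linear relation Λ the operator H^Λ is a self-adjoint extension of S, and every self-adjoint extension of S equals H^Λ for exactly one self-adjoint linear relation Λ. -/

import Mathlib

/-! Green's identity turns the defect `⟪S* φ, ψ⟫ - ⟪φ, S* ψ⟫` into the form
`⟪Γ₁ φ, Γ₂ ψ⟫ - ⟪Γ₂ φ, Γ₁ ψ⟫` of the boundary values, and `(Γ₁, Γ₂)` is onto `G × G`.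
Hence `(H^Λ)* = H^{Λ*}` for every linear relation `Λ`, and `Λ ↦ H^Λ` is injective, so
`H^Λ` is self-adjoint exactly when `Λ` is. Conversely a self-adjoint extension `T` satisfies
`S ⊆ T = T* ⊆ S*`, and Green's identity puts `ker Γ₁ ∩ ker Γ₂` into `dom T* = dom T`;
so `T = H^Λ` with `Λ` the image of `dom T` under `(Γ₁, Γ₂)`. -/

open ContinuousLinearMap

variable {H : Type*} [NormedAddCommGroup H] [InnerProductSpace ℂ H] [CompleteSpace H]
variable {G : Type*} [NormedAddCommGroup G] [InnerProductSpace ℂ G] [CompleteSpace G]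

/-- The operator `M^{A,B}` on `G × G`, `(x₁,x₂) ↦ (A x₁ - B x₂, B x₁ + A x₂)`. -/
noncomputable def MAB (A B : G →L[ℂ] G) : (G × G) →L[ℂ] (G × G) :=
  ((A.comp (fst ℂ G G)) - (B.comp (snd ℂ G G))).prod
    ((B.comp (fst ℂ G G)) + (A.comp (snd ℂ G G)))

/-- A bounded operator is boundedly invertible if it has a bounded two-sided inverse. -/
def IsBoundedlyInvertible {E F : Type*} [NormedAddCommGroup E] [NormedSpace ℂ E]
    [NormedAddCommGroup F] [NormedSpace ℂ F] (T : E →L[ℂ] F) : Prop :=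
  ∃ T' : F →L[ℂ] E, (∀ x, T' (T x) = x) ∧ (∀ y, T (T' y) = y)

/-- A densely defined operator is symmetric if `⟪Sφ, ψ⟫ = ⟪φ, Sψ⟫` on its domain. -/
def IsSymmetricPMap (S : H →ₗ.[ℂ] H) : Prop :=
  ∀ φ ψ : S.domain, (inner ℂ (S φ) (ψ : H) : ℂ) = inner ℂ (φ : H) (S ψ)

/-- A boundary triple `(G, Γ₁, Γ₂)` for a symmetric operator `S`: two boundary maps
on `dom S*` satisfying the abstract Green identity and joint surjectivity. -/
structure BoundaryTriple (S : H →ₗ.[ℂ] H) (G : Type*) [NormedAddCommGroup G]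
    [InnerProductSpace ℂ G] [CompleteSpace G] where
  Γ₁ : S.adjoint.domain →ₗ[ℂ] G
  Γ₂ : S.adjoint.domain →ₗ[ℂ] G
  green : ∀ φ ψ : S.adjoint.domain,
    (inner ℂ (φ : H) (S.adjoint ψ) : ℂ) - inner ℂ (S.adjoint φ) (ψ : H)
      = (inner ℂ (Γ₁ φ) (Γ₂ ψ) : ℂ) - inner ℂ (Γ₂ φ) (Γ₁ ψ)
  surj : Function.Surjective fun φ : S.adjoint.domain => (Γ₁ φ, Γ₂ φ)

/-- The restriction of a partially defined operator `T` to a submodule `K` of its domain. -/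
noncomputable def pmapRestrict (T : H →ₗ.[ℂ] H) (K : Submodule ℂ T.domain) : H →ₗ.[ℂ] H where
  domain := K.map T.domain.subtype
  toFun := (T.toFun.comp K.subtype).comp
    (Submodule.equivMapOfInjective T.domain.subtype
      (Submodule.injective_subtype T.domain) K).symm.toLinearMap

/-- The distinguished extension `H⁰`: the restriction of `S*` to `ker Γ₁`. -/
noncomputable def H0 (S : H →ₗ.[ℂ] H) (BT : BoundaryTriple S G) : H →ₗ.[ℂ] H :=
  pmapRestrict S.adjoint (LinearMap.ker BT.Γ₁)

/-- The extension `H^{A,B}`: the restriction of `S*` to `{φ : A Γ₁ φ = B Γ₂ φ}`. -/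
noncomputable def HAB (S : H →ₗ.[ℂ] H) (BT : BoundaryTriple S G) (A B : G →L[ℂ] G) :
    H →ₗ.[ℂ] H :=
  pmapRestrict S.adjoint
    (LinearMap.ker ((A.toLinearMap.comp BT.Γ₁) - (B.toLinearMap.comp BT.Γ₂)))

/-- `R` is the resolvent of `T` at `z`: a bounded, everywhere defined two-sided inverse
of `T - z`. -/
def IsResolventOf (T : H →ₗ.[ℂ] H) (z : ℂ) (R : H →L[ℂ] H) : Prop :=
  (∀ f : H, ∃ φ : T.domain, (φ : H) = R f ∧ T φ - z • (φ : H) = f) ∧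
  (∀ φ : T.domain, R (T φ - z • (φ : H)) = φ)

/-- `z` is in the resolvent set of `T`. -/
def InResolventSet (T : H →ₗ.[ℂ] H) (z : ℂ) : Prop := ∃ R, IsResolventOf T z R

/-- `γz` is the `Γ`-field at `z`: the inverse of `Γ₁` restricted to the deficiency
space `N_z = ker (S* - z)`. -/
def IsGammaField (S : H →ₗ.[ℂ] H) (BT : BoundaryTriple S G) (z : ℂ) (γz : G →L[ℂ] H) : Prop :=
  (∀ ξ : G, ∃ φ : S.adjoint.domain, (φ : H) = γz ξ ∧ S.adjoint φ = z • (φ : H) ∧ BT.Γ₁ φ = ξ) ∧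
  (∀ φ : S.adjoint.domain, S.adjoint φ = z • (φ : H) → γz (BT.Γ₁ φ) = (φ : H))

/-- `Qz` is the `Q`-function (Weyl function) at `z`: `Qz = Γ₂ ∘ γz`. -/
def IsQFunction (S : H →ₗ.[ℂ] H) (BT : BoundaryTriple S G) (z : ℂ)
    (γz : G →L[ℂ] H) (Qz : G →L[ℂ] G) : Prop :=
  IsGammaField S BT z γz ∧
    ∀ φ : S.adjoint.domain, S.adjoint φ = z • (φ : H) → Qz (BT.Γ₁ φ) = BT.Γ₂ φ

/-- The adjoint of a linear relation. -/
def relAdjoint (Λ : Submodule ℂ (G × G)) : Submodule ℂ (G × G) where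
  carrier := {p | ∀ q ∈ Λ, (inner ℂ p.1 q.2 : ℂ) = inner ℂ p.2 q.1}
  add_mem' := by
    intro a b ha hb q hq
    simp [inner_add_left, ha q hq, hb q hq]
  zero_mem' := by
    intro q hq; simp
  smul_mem' := by
    intro c p hp q hq
    simp [inner_smul_left, hp q hq]

/-- A linear relation is self-adjoint if it equals its adjoint. -/
def IsSelfAdjointRel (Λ : Submodule ℂ (G × G)) : Prop := relAdjoint Λ = Λ

/-- The extension `H^Λ`: the restriction of `S*` to `{φ : (Γ₁ φ, Γ₂ φ) ∈ Λ}`. -/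
noncomputable def HLam (S : H →ₗ.[ℂ] H) (BT : BoundaryTriple S G)
    (Λ : Submodule ℂ (G × G)) : H →ₗ.[ℂ] H :=
  pmapRestrict S.adjoint (Submodule.comap (BT.Γ₁.prod BT.Γ₂) Λ)

open LinearPMap
open scoped InnerProductSpace

namespace LinearPMap

section Order

variable {R E F : Type*} [Ring R] [AddCommGroup E] [Module R E] [AddCommGroup F] [Module R F]

theorem le_of_le_of_le_of_domain_le {f g h : E →ₗ.[R] F} (hf : f ≤ h) (hg : g ≤ h)
    (hd : f.domain ≤ g.domain) : f ≤ g :=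
  ⟨hd, fun x _ hxy => (hf.2 (y := ⟨x, hg.1 (hd x.2)⟩) rfl).trans (hg.2 hxy.symm).symm⟩

theorem eq_of_le_of_le_of_domain_eq {f g h : E →ₗ.[R] F} (hf : f ≤ h) (hg : g ≤ h)
    (hd : f.domain = g.domain) : f = g :=
  le_antisymm (le_of_le_of_le_of_domain_le hf hg hd.le) (le_of_le_of_le_of_domain_le hg hf hd.ge)

end Order

variable {𝕜 E F : Type*} [RCLike 𝕜] [NormedAddCommGroup E] [InnerProductSpace 𝕜 E]
  [NormedAddCommGroup F] [InnerProductSpace 𝕜 F] [CompleteSpace E]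

theorem adjoint_le_adjoint {T₁ T₂ : E →ₗ.[𝕜] F} (h : T₁ ≤ T₂) (hT₁ : Dense (T₁.domain : Set E)) :
    T₂† ≤ T₁† :=
  IsFormalAdjoint.le_adjoint hT₁ fun x y => by
    obtain ⟨x₂, hx, hval⟩ := exists_of_le h x
    rw [hval, hx]
    exact (adjoint_isFormalAdjoint (hT₁.mono h.1)).symm x₂ y

theorem coe_mem_adjoint_domain_iff_of_adjoint_le {T : E →ₗ.[𝕜] F} {A : F →ₗ.[𝕜] E}
    (hT : Dense (T.domain : Set E)) (hA : T† ≤ A) (x : A.domain) :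
    (x : F) ∈ T†.domain ↔ ∀ y : T.domain, ⟪A x, y⟫_𝕜 = ⟪(x : F), T y⟫_𝕜 := by
  refine ⟨fun hx y => ?_, fun h => mem_adjoint_domain_of_exists _ ⟨A x, h⟩⟩
  rw [← hA.2 (x := ⟨x, hx⟩) rfl]
  exact adjoint_isFormalAdjoint hT ⟨x, hx⟩ y

end LinearPMap

omit [CompleteSpace G] in
theorem mem_relAdjoint {Λ : Submodule ℂ (G × G)} {p : G × G} :
    p ∈ relAdjoint Λ ↔ ∀ q ∈ Λ, ⟪p.1, q.2⟫_ℂ = ⟪p.2, q.1⟫_ℂ :=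
  Iff.rfl

omit [CompleteSpace G] in
theorem relAdjoint_top : relAdjoint (⊤ : Submodule ℂ (G × G)) = ⊥ := by
  refine (Submodule.eq_bot_iff _).2 fun p hp => ?_
  have h₁ : ⟪p.1, p.1⟫_ℂ = ⟪p.2, 0⟫_ℂ := hp (0, p.1) trivial
  have h₂ : ⟪p.1, 0⟫_ℂ = ⟪p.2, p.2⟫_ℂ := hp (p.2, 0) trivial
  rw [inner_zero_right, inner_self_eq_zero] at h₁
  rw [inner_zero_right, eq_comm, inner_self_eq_zero] at h₂
  exact Prod.ext h₁ h₂

section pmapRestrict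

omit [CompleteSpace H]

theorem pmapRestrict_domain (T : H →ₗ.[ℂ] H) (K : Submodule ℂ T.domain) :
    (pmapRestrict T K).domain = K.map T.domain.subtype :=
  rfl

theorem coe_mem_pmapRestrict_domain {T : H →ₗ.[ℂ] H} {K : Submodule ℂ T.domain} {φ : T.domain} :
    (φ : H) ∈ (pmapRestrict T K).domain ↔ φ ∈ K :=
  show (φ : H) ∈ K.map T.domain.subtype ↔ φ ∈ K by simp

theorem pmapRestrict_le (T : H →ₗ.[ℂ] H) (K : Submodule ℂ T.domain) : pmapRestrict T K ≤ T :=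
  ⟨Submodule.map_subtype_le _ _, fun x _ h =>
    congrArg T <| Subtype.ext <|
      (Submodule.map_equivMapOfInjective_symm_apply _ T.domain.injective_subtype K x).trans h⟩

theorem pmapRestrict_apply {T : H →ₗ.[ℂ] H} {K : Submodule ℂ T.domain}
    (x : (pmapRestrict T K).domain) (ψ : T.domain) (h : (x : H) = ψ) : pmapRestrict T K x = T ψ :=
  (pmapRestrict_le T K).2 h

theorem pmapRestrict_injective (T : H →ₗ.[ℂ] H) : Function.Injective (pmapRestrict T) :=
  fun _ _ h => Submodule.map_injective_of_injective T.domain.injective_subtype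
    (congrArg LinearPMap.domain h)

theorem pmapRestrict_comap_domain {T T' : H →ₗ.[ℂ] H} (h : T' ≤ T) :
    pmapRestrict T (T'.domain.comap T.domain.subtype) = T' :=
  LinearPMap.eq_of_le_of_le_of_domain_eq (pmapRestrict_le T _) h <| by
    rw [pmapRestrict_domain, Submodule.map_comap_subtype, inf_eq_right.2 h.1]

theorem forall_pmapRestrict_domain {T : H →ₗ.[ℂ] H} {K : Submodule ℂ T.domain} {P : H → H → Prop} :
    (∀ y : (pmapRestrict T K).domain, P y (pmapRestrict T K y)) ↔ ∀ ψ ∈ K, P ψ (T ψ) := by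
  refine ⟨fun h ψ hψ => ?_, fun h ⟨y, hy⟩ => ?_⟩
  · have hψ' := coe_mem_pmapRestrict_domain.2 hψ
    have hP := h ⟨ψ, hψ'⟩
    rwa [pmapRestrict_apply _ ψ rfl] at hP
  · obtain ⟨ψ, hψ, rfl⟩ := Submodule.mem_map.1 hy
    rw [pmapRestrict_apply _ ψ rfl]
    exact h ψ hψ

end pmapRestrict

namespace BoundaryTriple

variable {S : H →ₗ.[ℂ] H} (BT : BoundaryTriple S G)

theorem inner_adjoint_comm_iff (φ ψ : S†.domain) :
    ⟪S† φ, (ψ : H)⟫_ℂ = ⟪(φ : H), S† ψ⟫_ℂ ↔ ⟪BT.Γ₁ φ, BT.Γ₂ ψ⟫_ℂ = ⟪BT.Γ₂ φ, BT.Γ₁ ψ⟫_ℂ := by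
  rw [eq_comm, ← sub_eq_zero, BT.green, sub_eq_zero]

theorem boundary_mem_relAdjoint_iff (φ : S†.domain) (Λ : Submodule ℂ (G × G)) :
    (BT.Γ₁ φ, BT.Γ₂ φ) ∈ relAdjoint Λ ↔
      ∀ ψ : S†.domain, (BT.Γ₁ ψ, BT.Γ₂ ψ) ∈ Λ → ⟪S† φ, (ψ : H)⟫_ℂ = ⟪(φ : H), S† ψ⟫_ℂ := by
  rw [mem_relAdjoint]
  refine ⟨fun h ψ hψ => (BT.inner_adjoint_comm_iff φ ψ).2 (h _ hψ), fun h q hq => ?_⟩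
  obtain ⟨ψ, rfl⟩ := BT.surj q
  exact (BT.inner_adjoint_comm_iff φ ψ).1 (h ψ hq)

theorem boundary_eq_zero_of_mem_domain (hdense : Dense (S.domain : Set H))
    (hsymm : IsSymmetricPMap S) (φ : S†.domain) (hφ : (φ : H) ∈ S.domain) :
    (BT.Γ₁ φ, BT.Γ₂ φ) = 0 := by
  have hS : S ⟨φ, hφ⟩ = S† φ :=
    (IsFormalAdjoint.le_adjoint hdense (hsymm : S.IsFormalAdjoint S)).2 rfl
  have hmem : (BT.Γ₁ φ, BT.Γ₂ φ) ∈ relAdjoint ⊤ := by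
    refine (BT.boundary_mem_relAdjoint_iff φ ⊤).2 fun ψ _ => ?_
    rw [← hS, ← inner_conj_symm, ← adjoint_isFormalAdjoint hdense ψ ⟨φ, hφ⟩, inner_conj_symm]
  rwa [relAdjoint_top, Submodule.mem_bot] at hmem

theorem coe_mem_HLam_domain {Λ : Submodule ℂ (G × G)} {φ : S†.domain} :
    (φ : H) ∈ (HLam S BT Λ).domain ↔ (BT.Γ₁ φ, BT.Γ₂ φ) ∈ Λ :=
  coe_mem_pmapRestrict_domain

theorem HLam_le_adjoint (Λ : Submodule ℂ (G × G)) : HLam S BT Λ ≤ S† :=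
  pmapRestrict_le _ _

theorem le_HLam (hdense : Dense (S.domain : Set H)) (hsymm : IsSymmetricPMap S)
    (Λ : Submodule ℂ (G × G)) : S ≤ HLam S BT Λ := by
  have hS := IsFormalAdjoint.le_adjoint hdense (hsymm : S.IsFormalAdjoint S)
  refine le_of_le_of_le_of_domain_le hS (BT.HLam_le_adjoint Λ) fun x hx => ?_
  refine BT.coe_mem_HLam_domain (φ := ⟨x, hS.1 hx⟩) |>.2 ?_
  rw [BT.boundary_eq_zero_of_mem_domain hdense hsymm _ hx]
  exact Λ.zero_mem

theorem HLam_injective : Function.Injective (HLam S BT) :=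
  (pmapRestrict_injective _).comp (Submodule.comap_injective_of_surjective BT.surj)

theorem HLam_adjoint (hdense : Dense (S.domain : Set H)) (hsymm : IsSymmetricPMap S)
    (Λ : Submodule ℂ (G × G)) : (HLam S BT Λ)† = HLam S BT (relAdjoint Λ) := by
  have hle := BT.le_HLam hdense hsymm Λ
  have hadj : (HLam S BT Λ)† ≤ S† := adjoint_le_adjoint hle hdense
  have hdom : ∀ φ : S†.domain,
      (φ : H) ∈ (HLam S BT Λ)†.domain ↔ (φ : H) ∈ (HLam S BT (relAdjoint Λ)).domain := by
    intro φ
    rw [coe_mem_adjoint_domain_iff_of_adjoint_le (hdense.mono hle.1) hadj, coe_mem_HLam_domain,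
      boundary_mem_relAdjoint_iff]
    exact forall_pmapRestrict_domain (P := fun ψ v => ⟪S† φ, ψ⟫_ℂ = ⟪(φ : H), v⟫_ℂ)
  refine eq_of_le_of_le_of_domain_eq hadj (BT.HLam_le_adjoint _) <| SetLike.ext fun x =>
    ⟨fun hx => (hdom ⟨x, hadj.1 hx⟩).1 hx, fun hx => (hdom ⟨x, (BT.HLam_le_adjoint _).1 hx⟩).2 hx⟩

theorem isSelfAdjoint_HLam_iff (hdense : Dense (S.domain : Set H)) (hsymm : IsSymmetricPMap S)
    (Λ : Submodule ℂ (G × G)) : IsSelfAdjoint (HLam S BT Λ) ↔ IsSelfAdjointRel Λ := by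
  rw [isSelfAdjoint_def, BT.HLam_adjoint hdense hsymm, BT.HLam_injective.eq_iff]
  rfl

theorem ker_le_comap_domain {T : H →ₗ.[ℂ] H} (hT : IsSelfAdjoint T) (hTS : T ≤ S†) :
    LinearMap.ker (BT.Γ₁.prod BT.Γ₂) ≤ T.domain.comap S†.domain.subtype := by
  intro χ hχ
  have hΓ : BT.Γ₁ χ = 0 ∧ BT.Γ₂ χ = 0 := Prod.ext_iff.1 hχ
  show (χ : H) ∈ T.domain
  rw [← isSelfAdjoint_def.1 hT]
  refine mem_adjoint_domain_of_exists _ ⟨S† χ, fun y => ?_⟩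
  rw [hTS.2 (y := ⟨y, hTS.1 y.2⟩) rfl, BT.inner_adjoint_comm_iff χ ⟨y, hTS.1 y.2⟩, hΓ.1, hΓ.2,
    inner_zero_left, inner_zero_left]

theorem exists_HLam_eq (hdense : Dense (S.domain : Set H)) {T : H →ₗ.[ℂ] H} (hST : S ≤ T)
    (hT : IsSelfAdjoint T) : ∃ Λ, HLam S BT Λ = T := by
  have hTS : T ≤ S† := isSelfAdjoint_def.1 hT ▸ adjoint_le_adjoint hST hdense
  refine ⟨(T.domain.comap S†.domain.subtype).map (BT.Γ₁.prod BT.Γ₂), ?_⟩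
  rw [HLam, Submodule.comap_map_eq_self (BT.ker_le_comap_domain hT hTS),
    pmapRestrict_comap_domain hTS]

end BoundaryTriple

theorem selfadjoint_extensions_bijection (S : H →ₗ.[ℂ] H)
    (hdense : Dense (S.domain : Set H)) (hsymm : IsSymmetricPMap S)
    (BT : BoundaryTriple S G) :
    (∀ Λ : Submodule ℂ (G × G), IsSelfAdjointRel Λ →
        S ≤ HLam S BT Λ ∧ _root_.IsSelfAdjoint (HLam S BT Λ)) ∧
    (∀ T : H →ₗ.[ℂ] H, S ≤ T → _root_.IsSelfAdjoint T →
        ∃! Λ : Submodule ℂ (G × G), IsSelfAdjointRel Λ ∧ HLam S BT Λ = T) := by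
  have hsa := BT.isSelfAdjoint_HLam_iff hdense hsymm
  refine ⟨fun Λ hΛ => ⟨BT.le_HLam hdense hsymm Λ, (hsa Λ).2 hΛ⟩, fun T hST hT => ?_⟩
  obtain ⟨Λ, rfl⟩ := BT.exists_HLam_eq hdense hST hT
  exact ⟨Λ, ⟨(hsa Λ).1 hT, rfl⟩, fun Λ' hΛ' => BT.HLam_injective hΛ'.2⟩
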